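/- arXiv:2110.07479 — 2 statements merged into one kernel-verified Lean document; each statement's English description precedes it below -/
import Mathlib

section
/- Let g : Θ → ℝ be a function, c : ℝ≥0 → ℝ≥0 monotone non-decreasing, left-continuous with c(0)=0, and define the violation cost c̄(θ) = c(max(g(θ), 0)). Then for any budget b ≥ 0 and θ with {r : c(r) ≤ b} bounded, c̄(θ) ≤ b if and only if g(θ) ≤ c⁻¹(b), where c⁻¹(b) = sup { r ≥ 0 : c(r) ≤ b }. -/
open scoped NNReal

theorem stmt_2 {Θ : Type*} (g : Θ → ℝ) (c : ℝ≥0 → ℝ≥0)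
    (h0 : c 0 = 0) (hmono : Monotone c)
    (hlc : ∀ r : ℝ≥0, ContinuousWithinAt c (Set.Iic r) r)
    (b : ℝ≥0) (θ : Θ) (hbdd : BddAbove {r : ℝ≥0 | c r ≤ b}) :
    c (Real.toNNReal (max (g θ) 0)) ≤ b ↔
      g θ ≤ ((sSup {r : ℝ≥0 | c r ≤ b} : ℝ≥0) : ℝ) := by
  set S : Set ℝ≥0 := {r : ℝ≥0 | c r ≤ b} with hS
  have hne : S.Nonempty := ⟨0, by simp [hS, h0]⟩
  set s : ℝ≥0 := sSup S with hs
  have hlub : IsLUB S s := isLUB_csSup hne hbdd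
  -- key: c s ≤ b
  have hcs : c s ≤ b := by
    have hsub : S ⊆ Set.Iic s := fun r hr => hlub.1 hr
    have hmem : s ∈ closure S := hlub.mem_closure hne
    have hnb : (nhdsWithin s S).NeBot := mem_closure_iff_nhdsWithin_neBot.1 hmem
    have htend : Filter.Tendsto c (nhdsWithin s S) (nhds (c s)) :=
      (hlc s).mono_left (nhdsWithin_mono s hsub)
    exact le_of_tendsto htend (Filter.eventually_inf_principal.2 (Filter.Eventually.of_forall
      (fun r hr => hr)))
  constructor
  · intro h
    have hx : (Real.toNNReal (max (g θ) 0)) ∈ S := h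
    have := hlub.1 hx
    calc g θ ≤ max (g θ) 0 := le_max_left _ _
      _ = ((Real.toNNReal (max (g θ) 0) : ℝ≥0) : ℝ) := by
            rw [Real.coe_toNNReal _ (le_max_right _ _)]
      _ ≤ (s : ℝ) := by exact_mod_cast this
  · intro h
    have hx : Real.toNNReal (max (g θ) 0) ≤ s := by
      rw [Real.toNNReal_le_iff_le_coe]
      exact max_le h s.coe_nonneg
    exact le_trans (hmono hx) hcs
end

section
/- Let f be a Gaussian random variable with mean μ and standard deviation σ > 0, let m ∈ ℝ be the incumbent value, and define the improvement I = max(0, m - f). Then E[I] = (m - μ)·Φ(z) + σ·φ(z), where z = (m - μ)/σ, Φ is the standard normal CDF and φ is the standard normal density. -/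
open MeasureTheory ProbabilityTheory
open scoped NNReal ENNReal

/-- The standard normal probability density function. -/
noncomputable def stdNormalPDF (z : ℝ) : ℝ :=
  (Real.sqrt (2 * Real.pi))⁻¹ * Real.exp (-z ^ 2 / 2)

/-- The standard normal cumulative distribution function. -/
noncomputable def stdNormalCDF (z : ℝ) : ℝ :=
  ∫ u in Set.Iic z, stdNormalPDF u

lemma gaussianPDFReal_zero_one (u : ℝ) : gaussianPDFReal 0 1 u = stdNormalPDF u := by
  simp [gaussianPDFReal, stdNormalPDF]

lemma integrable_stdNormalPDF : Integrable stdNormalPDF := by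
  have := integrable_gaussianPDFReal 0 1
  simpa [funext gaussianPDFReal_zero_one] using this

lemma integrable_mul_stdNormalPDF : Integrable (fun u : ℝ => u * stdNormalPDF u) := by
  have h := (integrable_mul_exp_neg_mul_sq (b := 1/2) (by norm_num)).const_mul
    (Real.sqrt (2 * Real.pi))⁻¹
  refine h.congr ?_
  refine ae_of_all _ fun u => ?_
  simp only [stdNormalPDF]
  ring_nf

lemma hasDerivAt_neg_stdNormalPDF (u : ℝ) :
    HasDerivAt (fun x => -stdNormalPDF x) (u * stdNormalPDF u) u := by
  have h : HasDerivAt (fun x : ℝ => -x ^ 2 / 2) (-u) u := by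
    have := ((hasDerivAt_pow 2 u).neg).div_const 2
    simpa using this.congr_deriv (by ring)
  have h2 := (h.exp).const_mul (Real.sqrt (2 * Real.pi))⁻¹
  have h3 := h2.neg
  simpa [stdNormalPDF, mul_comm, mul_left_comm, mul_assoc, Pi.neg_def] using h3.congr_deriv (by
    simp [stdNormalPDF]; ring)

lemma tendsto_neg_stdNormalPDF_atBot :
    Filter.Tendsto (fun x => -stdNormalPDF x) Filter.atBot (nhds 0) := by
  have hsq : Filter.Tendsto (fun x : ℝ => x ^ 2) Filter.atBot Filter.atTop := by
    have := (Filter.tendsto_pow_atTop (n := 2) (by norm_num)).comp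
      (Filter.tendsto_neg_atBot_atTop (G := ℝ))
    exact this.congr fun x => by simp [Function.comp, neg_pow]
  have h1 : Filter.Tendsto (fun x : ℝ => -x ^ 2 / 2) Filter.atBot Filter.atBot := by
    apply Filter.Tendsto.atBot_div_const (by norm_num)
    exact Filter.tendsto_neg_atBot_iff.mpr hsq
  have h2 := (Real.tendsto_exp_atBot.comp h1).const_mul (Real.sqrt (2 * Real.pi))⁻¹
  simpa [stdNormalPDF] using h2.neg

lemma integral_Iic_mul_stdNormalPDF (z : ℝ) :
    ∫ u in Set.Iic z, u * stdNormalPDF u = -stdNormalPDF z := by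
  have := integral_Iic_of_hasDerivAt_of_tendsto' (f := fun x => -stdNormalPDF x)
    (f' := fun u => u * stdNormalPDF u) (a := z) (m := 0)
    (fun x _ => hasDerivAt_neg_stdNormalPDF x)
    (integrable_mul_stdNormalPDF.integrableOn)
    tendsto_neg_stdNormalPDF_atBot
  simpa using this

lemma integral_max_stdNormal (z : ℝ) :
    ∫ u, max 0 (z - u) * stdNormalPDF u = z * stdNormalCDF z + stdNormalPDF z := by
  have heq : (fun u => max 0 (z - u) * stdNormalPDF u)
      = Set.indicator (Set.Iic z) (fun u => (z - u) * stdNormalPDF u) := by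
    funext u
    by_cases h : u ≤ z
    · rw [Set.indicator_of_mem (by exact h)]
      rw [max_eq_right (by linarith)]
    · rw [Set.indicator_of_notMem (by simpa using h)]
      rw [max_eq_left (by linarith), zero_mul]
  rw [heq, integral_indicator measurableSet_Iic]
  have h1 : ∀ u : ℝ, (z - u) * stdNormalPDF u = z * stdNormalPDF u - u * stdNormalPDF u :=
    fun u => by ring
  simp_rw [h1]
  rw [integral_sub ((integrable_stdNormalPDF.const_mul z).integrableOn)
    (integrable_mul_stdNormalPDF.integrableOn),
    integral_Iic_mul_stdNormalPDF, integral_const_mul, stdNormalCDF]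
  ring

theorem stmt_8 (μ σ m : ℝ) (hσ : 0 < σ) :
    ∫ x, max 0 (m - x) ∂(gaussianReal μ (Real.toNNReal (σ ^ 2))) =
      (m - μ) * stdNormalCDF ((m - μ) / σ) + σ * stdNormalPDF ((m - μ) / σ) := by
  set z := (m - μ) / σ with hz
  have hmap : (gaussianReal 0 1).map (fun u => σ * u + μ)
      = gaussianReal μ (Real.toNNReal (σ ^ 2)) := by
    have h1 : (fun u : ℝ => σ * u + μ) = (fun x => x + μ) ∘ (fun u => σ * u) := rfl
    rw [h1, ← Measure.map_map (measurable_add_const μ) (measurable_const_mul σ)]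
    rw [gaussianReal_map_const_mul, gaussianReal_map_add_const]
    congr 1
    · ring
    · ext
      simp [Real.coe_toNNReal _ (sq_nonneg σ)]
  rw [← hmap, integral_map (by fun_prop)
    (Continuous.aestronglyMeasurable (f := fun x : ℝ => max 0 (m - x)) (continuous_const.max (continuous_const.sub continuous_id')))]
  have hpt : ∀ u : ℝ, max 0 (m - (σ * u + μ)) = σ * max 0 (z - u) := by
    intro u
    rw [mul_max_of_nonneg _ _ hσ.le, mul_zero]
    congr 1
    rw [hz, mul_sub, mul_div_assoc', mul_div_cancel_left₀ _ hσ.ne']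
    ring
  simp_rw [hpt]
  rw [integral_const_mul]
  have hN : ∫ u, max 0 (z - u) ∂(gaussianReal 0 1)
      = ∫ u, max 0 (z - u) * stdNormalPDF u := by
    rw [gaussianReal_of_var_ne_zero 0 one_ne_zero]
    have hpdf : gaussianPDF 0 1
        = fun x => ((Real.toNNReal (gaussianPDFReal 0 1 x) : ℝ≥0) : ℝ≥0∞) := rfl
    rw [hpdf, integral_withDensity_eq_integral_smul
      ((measurable_gaussianPDFReal 0 1).real_toNNReal)]
    congr 1
    funext u
    rw [NNReal.smul_def, Real.coe_toNNReal _ (gaussianPDFReal_nonneg 0 1 u),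
      gaussianPDFReal_zero_one, smul_eq_mul, mul_comm]
  rw [hN, integral_max_stdNormal, hz]
  field_simp
end
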